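/- arXiv:math/0306013 — 3 statements merged into one kernel-verified Lean document; each statement's English description precedes it below -/
import Mathlib

section
/- Let J ⊆ Z/2Z[e_1,...,e_n,x] be an ideal, let ψ: Z/2Z[e_1,...,e_n,x] → Z/2Z[e_1,...,e_n] be the evaluation x ↦ 0, and let A = Z/2Z[e_1,...,e_n,x]/K for some ideal K ⊇ J such that A is free over Z/2Z[x]. Suppose ψ(J) = ψ(K) and suppose that whenever x·γ ∈ K one has γ ∈ K. Then, arguing by induction on degree, every homogeneous element of K lies in J; i.e., K = J. -/
/-!
Every `f ∈ K` is congruent modulo `J` to `x·γ` with `γ ∈ K`: pick `g ∈ J` with `ψ g = ψ f`,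
so that `x ∣ f - g`, and saturation of `K` puts the quotient `γ` in `K`. Since `J` is
homogeneous, taking degree-`k` components gives `f_k ≡ x·γ_{k-1} (mod J)`, so by induction on `k`
every homogeneous component of every element of `K` lies in `J`.
-/

open MvPolynomial

/-- The evaluation `ψ : (ℤ/2)[e₁,…,eₙ,x] → (ℤ/2)[e₁,…,eₙ]` sending `x ↦ 0`. -/
noncomputable def psiMap (n : ℕ) :
    MvPolynomial (Fin n ⊕ Unit) (ZMod 2) →+* MvPolynomial (Fin n) (ZMod 2) :=
  (aeval (Sum.elim MvPolynomial.X (fun _ => 0))).toRingHom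

namespace MvPolynomial

section HomogeneousComponent

variable {σ R : Type*} [CommSemiring R]

lemma homogeneousComponent_zero_X_mul (s : σ) (p : MvPolynomial σ R) :
    homogeneousComponent 0 (X s * p) = 0 := by
  classical
  simp [homogeneousComponent_zero, coeff_X_mul']

lemma degree_tsub_single_add_one {s : σ} {d : σ →₀ ℕ} (hs : s ∈ d.support) :
    (d - Finsupp.single s 1).degree + 1 = d.degree := by
  have hle : Finsupp.single s 1 ≤ d := by
    rwa [Finsupp.single_le_iff, Nat.one_le_iff_ne_zero, ← Finsupp.mem_support_iff]
  calc (d - Finsupp.single s 1).degree + 1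
      = (d - Finsupp.single s 1).degree + (Finsupp.single s 1).degree := by
        rw [Finsupp.degree_single]
    _ = d.degree := by rw [← map_add, tsub_add_cancel_of_le hle]

lemma homogeneousComponent_succ_X_mul (s : σ) (k : ℕ) (p : MvPolynomial σ R) :
    homogeneousComponent (k + 1) (X s * p) = X s * homogeneousComponent k p := by
  classical
  ext d
  rw [coeff_homogeneousComponent, coeff_X_mul', coeff_X_mul', coeff_homogeneousComponent]
  by_cases hs : s ∈ d.support
  · have := degree_tsub_single_add_one hs
    simp only [if_pos hs]
    split_ifs <;> first | rfl | omega
  · simp only [if_neg hs, ite_self]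

theorem ideal_le_of_forall_eq_add_X_mul {J K : Ideal (MvPolynomial σ R)} (s : σ)
    (hJ : ∀ f ∈ J, ∀ i : ℕ, homogeneousComponent i f ∈ J)
    (hK : ∀ f ∈ K, ∃ g ∈ J, ∃ γ ∈ K, f = g + X s * γ) :
    K ≤ J := by
  have hcomp : ∀ k, ∀ f ∈ K, homogeneousComponent k f ∈ J := by
    intro k
    induction k with
    | zero =>
      intro f hf
      obtain ⟨g, hg, γ, -, rfl⟩ := hK f hf
      rw [map_add, homogeneousComponent_zero_X_mul, add_zero]
      exact hJ g hg 0
    | succ k ih =>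
      intro f hf
      obtain ⟨g, hg, γ, hγ, rfl⟩ := hK f hf
      rw [map_add, homogeneousComponent_succ_X_mul]
      exact J.add_mem (hJ g hg _) (J.mul_mem_left _ (ih γ hγ))
  intro f hf
  rw [← sum_homogeneousComponent f]
  exact J.sum_mem fun k _ => hcomp k f hf

end HomogeneousComponent

section SetLastVariableZero

variable {σ R : Type*} [CommRing R]

lemma aeval_sumElim_X_zero_rename_inl (q : MvPolynomial σ R) :
    aeval (Sum.elim X fun _ : Unit => (0 : MvPolynomial σ R)) (rename Sum.inl q) = q := by
  rw [aeval_rename]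
  simp [Function.comp_def]

lemma X_inr_dvd_sub_rename_aeval_sumElim_X_zero (f : MvPolynomial (σ ⊕ Unit) R) :
    X (Sum.inr ()) ∣
      f - rename Sum.inl (aeval (Sum.elim X fun _ : Unit => (0 : MvPolynomial σ R)) f) := by
  induction f using MvPolynomial.induction_on with
  | C a => simp
  | add p q hp hq =>
    convert dvd_add hp hq using 1
    simp only [map_add]
    ring
  | mul_X p i hp =>
    cases i with
    | inl j =>
      convert dvd_mul_of_dvd_left hp (X (Sum.inl j)) using 1
      simp only [map_mul, aeval_X, Sum.elim_inl, rename_X]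
      ring
    | inr u => simp

lemma X_inr_dvd_sub_of_aeval_sumElim_X_zero_eq {f g : MvPolynomial (σ ⊕ Unit) R}
    (h : aeval (Sum.elim X fun _ : Unit => (0 : MvPolynomial σ R)) f =
      aeval (Sum.elim X fun _ : Unit => (0 : MvPolynomial σ R)) g) :
    X (Sum.inr ()) ∣ f - g := by
  convert dvd_sub (X_inr_dvd_sub_rename_aeval_sumElim_X_zero f)
    (X_inr_dvd_sub_rename_aeval_sumElim_X_zero g) using 1
  rw [h]
  ring

end SetLastVariableZero

end MvPolynomial

lemma psiMap_surjective (n : ℕ) : Function.Surjective (psiMap n) :=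
  fun q => ⟨rename Sum.inl q, aeval_sumElim_X_zero_rename_inl q⟩

theorem stmt7_general (n : ℕ) (J K : Ideal (MvPolynomial (Fin n ⊕ Unit) (ZMod 2)))
    (hJK : J ≤ K)
    (hJhom : ∀ f ∈ J, ∀ i : ℕ, homogeneousComponent i f ∈ J)
    (hpsi : Ideal.map (psiMap n) J = Ideal.map (psiMap n) K)
    (hsat : ∀ γ : MvPolynomial (Fin n ⊕ Unit) (ZMod 2),
      X (Sum.inr ()) * γ ∈ K → γ ∈ K) :
    K = J := by
  refine le_antisymm (ideal_le_of_forall_eq_add_X_mul (Sum.inr ()) hJhom fun f hf => ?_) hJK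
  have hψf : psiMap n f ∈ Ideal.map (psiMap n) J := hpsi ▸ Ideal.mem_map_of_mem _ hf
  obtain ⟨g, hg, hψg⟩ := (Ideal.mem_map_iff_of_surjective _ (psiMap_surjective n)).mp hψf
  obtain ⟨γ, hγ⟩ := X_inr_dvd_sub_of_aeval_sumElim_X_zero_eq hψg.symm
  refine ⟨g, hg, γ, hsat γ (hγ ▸ K.sub_mem hf (hJK hg)), ?_⟩
  rw [← hγ]
  ring

/-- If `J ⊆ K` are homogeneous ideals of `(ℤ/2)[e₁,…,eₙ,x]` with `ψ(J) = ψ(K)`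
(where `ψ` sets `x = 0`), and `x·γ ∈ K` implies `γ ∈ K`, then `K = J`. -/
theorem stmt7 (n : ℕ) (J K : Ideal (MvPolynomial (Fin n ⊕ Unit) (ZMod 2)))
    (hJK : J ≤ K)
    (hJhom : ∀ f ∈ J, ∀ i : ℕ, homogeneousComponent i f ∈ J)
    (hKhom : ∀ f ∈ K, ∀ i : ℕ, homogeneousComponent i f ∈ K)
    (hpsi : Ideal.map (psiMap n) J = Ideal.map (psiMap n) K)
    (hsat : ∀ γ : MvPolynomial (Fin n ⊕ Unit) (ZMod 2),
      X (Sum.inr ()) * γ ∈ K → γ ∈ K) :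
    K = J :=
  stmt7_general n J K hJK hJhom hpsi hsat
end

section
/- Let A be the quotient of Z/2Z[e_1,...,e_n,x] by the ideal J generated by the elements e_i(x−e_i) for 1 ≤ i ≤ n (no further relations, i.e., the Boolean arrangement). Then A is a free Z/2Z[x]-module with basis the squarefree monomials ∏_{i∈S} e_i over subsets S ⊆ {1,...,n}, of rank 2^n. -/
open MvPolynomial

/-- The defining ideal of the equivariant Orlik–Solomon algebra of the Boolean
arrangement: `(eᵢ(x - eᵢ) : 1 ≤ i ≤ n)` in `(ℤ/2)[e₁,…,eₙ,x]`. -/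
noncomputable abbrev booleanIdeal (n : ℕ) : Ideal (MvPolynomial (Fin n ⊕ Unit) (ZMod 2)) :=
  Ideal.span (Set.range fun i : Fin n =>
    X (Sum.inl i) * (X (Sum.inr ()) - X (Sum.inl i)))

/-- The equivariant Orlik–Solomon algebra of the Boolean arrangement. -/
noncomputable abbrev BooleanEOS (n : ℕ) : Type :=
  MvPolynomial (Fin n ⊕ Unit) (ZMod 2) ⧸ booleanIdeal n

/-- The structure map `(ℤ/2)[x] → BooleanEOS n`, `x ↦ x`. -/
noncomputable def booleanStructMap (n : ℕ) : Polynomial (ZMod 2) →+* BooleanEOS n :=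
  (Ideal.Quotient.mk _).comp
    (Polynomial.aeval (X (Sum.inr ()) : MvPolynomial (Fin n ⊕ Unit) (ZMod 2))).toRingHom

noncomputable def psi (n : ℕ) (T : Finset (Fin n)) :
    MvPolynomial (Fin n ⊕ Unit) (ZMod 2) →ₐ[ZMod 2] Polynomial (ZMod 2) :=
  aeval (fun v => match v with
    | Sum.inl i => if i ∈ T then Polynomial.X else 0
    | Sum.inr _ => Polynomial.X)

noncomputable def phi (n : ℕ) (T : Finset (Fin n)) : BooleanEOS n →+* Polynomial (ZMod 2) :=
  Ideal.Quotient.lift _ (psi n T).toRingHom (by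
    intro a ha
    have h : booleanIdeal n ≤ RingHom.ker (psi n T).toRingHom := by
      refine Ideal.span_le.mpr ?_
      rintro _ ⟨i, rfl⟩
      simp only [SetLike.mem_coe, RingHom.mem_ker, AlgHom.toRingHom_eq_coe, RingHom.coe_coe,
        map_mul, map_sub, psi, aeval_X]
      by_cases hi : i ∈ T <;> simp [hi]
    exact h ha)

lemma phi_mk (n : ℕ) (T : Finset (Fin n)) (p) :
    phi n T (Ideal.Quotient.mk _ p) = psi n T p := rfl

lemma phi_struct (n : ℕ) (T : Finset (Fin n)) (r : Polynomial (ZMod 2)) :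
    phi n T (booleanStructMap n r) = r := by
  have h : (psi n T).comp (Polynomial.aeval (X (Sum.inr ()) :
      MvPolynomial (Fin n ⊕ Unit) (ZMod 2))) = Polynomial.aeval Polynomial.X :=
    Polynomial.algHom_ext (by simp [psi])
  have := congrArg (fun f => f r) h
  simpa [booleanStructMap, phi_mk] using this

lemma phi_basisElt (n : ℕ) (T S : Finset (Fin n)) :
    phi n T (Ideal.Quotient.mk _ (∏ i ∈ S, X (Sum.inl i))) =
      if S ⊆ T then Polynomial.X ^ S.card else 0 := by
  rw [phi_mk]
  simp only [map_prod, psi, aeval_X]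
  by_cases h : S ⊆ T
  · rw [if_pos h, Finset.prod_congr rfl (fun i hi => if_pos (h hi)), Finset.prod_const]
  · rw [if_neg h]
    obtain ⟨i, hiS, hiT⟩ := Finset.not_subset.mp h
    exact Finset.prod_eq_zero hiS (by simp [hiT])
set_option maxHeartbeats 1000000 in
set_option synthInstance.maxHeartbeats 400000 in
/-- The equivariant Orlik–Solomon algebra of the Boolean arrangement is a free
`(ℤ/2)[x]`-module with basis the squarefree monomials `∏_{i∈S} eᵢ`, `S ⊆ {1,…,n}`;
in particular it has rank `2^n`. -/
theorem stmt8 (n : ℕ) :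
    letI : Algebra (Polynomial (ZMod 2)) (BooleanEOS n) := (booleanStructMap n).toAlgebra
    ∃ b : Module.Basis (Finset (Fin n)) (Polynomial (ZMod 2)) (BooleanEOS n),
      (∀ S : Finset (Fin n),
        b S = Ideal.Quotient.mk (booleanIdeal n) (∏ i ∈ S, X (Sum.inl i))) ∧
      Nat.card (Finset (Fin n)) = 2 ^ n := by
  letI : Algebra (Polynomial (ZMod 2)) (BooleanEOS n) := (booleanStructMap n).toAlgebra
  set R := Polynomial (ZMod 2) with hR
  set mk := Ideal.Quotient.mk (booleanIdeal n) with hmk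
  set e : Finset (Fin n) → BooleanEOS n := fun S => mk (∏ i ∈ S, X (Sum.inl i)) with he
  have hsmul : ∀ (r : R) (a : BooleanEOS n), r • a = booleanStructMap n r * a :=
    fun r a => Algebra.smul_def r a
  have hx : ∀ a : BooleanEOS n, mk (X (Sum.inr ())) * a = (Polynomial.X : R) • a := by
    intro a
    rw [hsmul]
    congr 1
    simp [booleanStructMap, hmk]
  have hsq : ∀ i : Fin n,
      mk (X (Sum.inl i)) * mk (X (Sum.inl i)) = mk (X (Sum.inr ())) * mk (X (Sum.inl i)) := by
    intro i
    rw [← map_mul, ← map_mul, Ideal.Quotient.eq]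
    have hg : X (Sum.inl i) * (X (Sum.inr ()) - X (Sum.inl i)) ∈ booleanIdeal n :=
      Ideal.subset_span ⟨i, rfl⟩
    have := (booleanIdeal n).neg_mem hg
    convert this using 1
    ring
  set M := Submodule.span R (Set.range e) with hM
  have hmulX : ∀ (v : Fin n ⊕ Unit) (a : BooleanEOS n), a ∈ M → a * mk (X v) ∈ M := by
    intro v a ha
    induction ha using Submodule.span_induction with
    | mem x hx' =>
      obtain ⟨S, rfl⟩ := hx'
      match v with
      | Sum.inr () =>
        rw [mul_comm, hx]
        exact M.smul_mem _ (Submodule.subset_span ⟨S, rfl⟩)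
      | Sum.inl i =>
        by_cases hiS : i ∈ S
        · have h1 : e S = mk (X (Sum.inl i)) * e (S.erase i) := by
            rw [he]
            dsimp only
            exact congrArg mk (Finset.mul_prod_erase S _ hiS).symm
          rw [h1, mul_assoc, mul_comm (e (S.erase i)), ← mul_assoc, hsq, mul_assoc,
            ← h1, hx]
          exact M.smul_mem _ (Submodule.subset_span ⟨S, rfl⟩)
        · have h1 : e S * mk (X (Sum.inl i)) = e (insert i S) := by
            rw [he]
            dsimp only
            rw [← map_mul, Finset.prod_insert hiS, mul_comm]
          rw [h1]
          exact Submodule.subset_span ⟨insert i S, rfl⟩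
    | zero => simp
    | add a b _ _ ha hb => rw [add_mul]; exact M.add_mem ha hb
    | smul r a _ ha => rw [smul_mul_assoc]; exact M.smul_mem r ha
  have hspan : ∀ p, mk p ∈ M := by
    intro p
    induction p using MvPolynomial.induction_on with
    | C a =>
      have h1 : mk (C a) = (Polynomial.C a : R) • e ∅ := by
        rw [hsmul]
        simp [booleanStructMap, he, hmk, ← map_mul]
      rw [h1]
      exact M.smul_mem _ (Submodule.subset_span ⟨∅, rfl⟩)
    | add p q hp hq => rw [map_add]; exact M.add_mem hp hq
    | mul_X p v hp => rw [map_mul]; exact hmulX v _ hp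
  have htop : ⊤ ≤ M := by
    intro a _
    obtain ⟨p, rfl⟩ := Ideal.Quotient.mk_surjective a
    exact hspan p
  have hli : LinearIndependent R e := by
    rw [Fintype.linearIndependent_iff]
    intro g hg T
    induction T using Finset.strongInduction with
    | _ T ih =>
      have h0 := congrArg (phi n T) hg
      rw [map_sum, map_zero] at h0
      have h1 : ∀ S, phi n T (g S • e S) =
          g S * (if S ⊆ T then Polynomial.X ^ S.card else 0) := by
        intro S
        rw [hsmul, map_mul, phi_struct, he]
        dsimp only
        rw [phi_basisElt]
      rw [Finset.sum_congr rfl (fun S _ => h1 S)] at h0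
      have h2 : (∑ S : Finset (Fin n), g S * (if S ⊆ T then Polynomial.X ^ S.card else 0))
          = g T * Polynomial.X ^ T.card := by
        rw [Finset.sum_eq_single T]
        · simp
        · intro S _ hST
          by_cases hsub : S ⊆ T
          · rw [ih S (hsub.ssubset_of_ne hST)]; ring
          · simp [hsub]
        · intro h; exact absurd (Finset.mem_univ T) h
      rw [h2] at h0
      rcases mul_eq_zero.mp h0 with h | h
      · exact h
      · exact absurd h (pow_ne_zero _ Polynomial.X_ne_zero)
  exact ⟨Module.Basis.mk hli htop, fun S => Module.Basis.mk_apply hli htop S,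
    by simp [Nat.card_eq_fintype_card]⟩
end

section
/- Let F be the face poset of an essential central real hyperplane arrangement (faces ordered by reverse inclusion of closures), and let Sal(A) = {(F, C) : C a chamber with C ≤ F} with partial order (F', C') ≤ (F, C) iff F' ≤ F and C' = F'C (meaning C and C' lie on the same side of every hyperplane containing F'). Define (F, C)* = (F, C̃), where C̃ is the chamber obtained by reflecting C across all hyperplanes containing F (i.e., the unique chamber adjacent to F whose sign agrees with C on hyperplanes not containing F and is opposite on hyperplanes containing F). Then the map (F,C) ↦ (F,C)* is an order-preserving involution of the poset Sal(A). -/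
variable (n d : ℕ) (a : Fin n → Fin d → ℝ)

/-- The linear form `ωᵢ(p) = ∑ⱼ aᵢⱼ pⱼ` of the `i`-th hyperplane of a central
arrangement in `ℝ^d`. -/
def omegaLin (i : Fin n) (p : Fin d → ℝ) : ℝ := ∑ j, a i j * p j

/-- A face of the arrangement, encoded by its sign vector: a vector
`F : Fin n → SignType` realized by some point of `ℝ^d`. -/
def IsFaceVec (F : Fin n → SignType) : Prop :=
  ∃ p : Fin d → ℝ, ∀ i, F i = SignType.sign (omegaLin n d a i p)

/-- A chamber: a face whose sign vector has no zero entries. -/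
def IsChamberVec (C : Fin n → SignType) : Prop :=
  IsFaceVec n d a C ∧ ∀ i, C i ≠ 0

/-- The face partial order (`F' ≤ F` iff `F ⊆ cl F'`, chambers minimal,
`{0}` maximal), in terms of sign vectors. -/
def FaceLe (F' F : Fin n → SignType) : Prop :=
  ∀ i, (F' i = 0 → F i = 0) ∧ (F' i ≠ 0 → F i = 0 ∨ F i = F' i)

/-- `C ≤ F` in the face poset, for a chamber `C`: `C` lies on the `F`-side of
every hyperplane not containing `F`. -/
def ChamberAdj (F C : Fin n → SignType) : Prop := ∀ i, F i ≠ 0 → C i = F i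

/-- The composition `F∘C`: the chamber agreeing with `F` where `F` is nonzero
and with `C` elsewhere. -/
def faceComp (F C : Fin n → SignType) : Fin n → SignType :=
  fun i => if F i ≠ 0 then F i else C i

/-- The Salvetti partial order: `(F',C') ≤ (F,C)` iff `F' ≤ F` and `C' = F'C`. -/
def SalLe (F' C' F C : Fin n → SignType) : Prop :=
  FaceLe n F' F ∧ C' = faceComp n F' C

/-- The conjugation involution `(F,C) ↦ (F,C̃)`: `C̃` is obtained from `C` by
reflecting across all hyperplanes containing `F`. -/
def salStar (F C : Fin n → SignType) : Fin n → SignType :=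
  fun i => if F i = 0 then -(C i) else C i

lemma omegaLin_comb (i : Fin n) (t : ℝ) (p q : Fin d → ℝ) :
    omegaLin n d a i (fun j => t * p j - q j)
      = t * omegaLin n d a i p - omegaLin n d a i q := by
  unfold omegaLin
  rw [Finset.mul_sum, ← Finset.sum_sub_distrib]
  exact Finset.sum_congr rfl fun j _ => by ring

/-- For an essential central arrangement, the map `(F,C) ↦ (F,C̃)` is a
well-defined order-preserving involution of the Salvetti poset. -/
theorem stmt16 (hess : ∀ p : Fin d → ℝ, (∀ i, omegaLin n d a i p = 0) → p = 0) :
    -- well-defined: `(F, C̃)` is again an element of the Salvetti poset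
    (∀ F C, IsFaceVec n d a F → IsChamberVec n d a C → ChamberAdj n F C →
      IsChamberVec n d a (salStar n F C) ∧ ChamberAdj n F (salStar n F C)) ∧
    -- involution
    (∀ F C : Fin n → SignType, salStar n F (salStar n F C) = C) ∧
    -- order-preserving
    (∀ F C F' C', IsFaceVec n d a F → IsChamberVec n d a C → ChamberAdj n F C →
      IsFaceVec n d a F' → IsChamberVec n d a C' → ChamberAdj n F' C' →
      SalLe n F' C' F C → SalLe n F' (salStar n F' C') F (salStar n F C)) := by
  refine ⟨?_, ?_, ?_⟩
  · rintro F C ⟨p, hp⟩ ⟨⟨q, hq⟩, hC0⟩ hadj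
    have hadjS : ChamberAdj n F (salStar n F C) := by
      intro i hFi
      simp [salStar, hFi, hadj i hFi]
    refine ⟨⟨?_, ?_⟩, hadjS⟩
    · -- realize salStar F C by t•p - q for t large
      set g : Fin n → ℝ := fun j =>
        if omegaLin n d a j p = 0 then 0 else |omegaLin n d a j q| / |omegaLin n d a j p|
      set t : ℝ := 1 + ∑ j, g j
      have hg0 : ∀ j, 0 ≤ g j := by
        intro j
        by_cases h : omegaLin n d a j p = 0 <;>
          simp [g, h, div_nonneg, abs_nonneg]
      have ht : ∀ i, omegaLin n d a i p ≠ 0 →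
          |omegaLin n d a i q| < t * |omegaLin n d a i p| := by
        intro i hi
        have h1 : g i ≤ ∑ j, g j :=
          Finset.single_le_sum (fun j _ => hg0 j) (Finset.mem_univ i)
        have h2 : g i = |omegaLin n d a i q| / |omegaLin n d a i p| := by simp [g, hi]
        have hpos : 0 < |omegaLin n d a i p| := abs_pos.mpr hi
        have : |omegaLin n d a i q| / |omegaLin n d a i p| < t := by
          rw [← h2]; simp only [t]; linarith
        calc |omegaLin n d a i q|
            = (|omegaLin n d a i q| / |omegaLin n d a i p|) * |omegaLin n d a i p| := by
              field_simp
          _ < t * |omegaLin n d a i p| := by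
              exact mul_lt_mul_of_pos_right this hpos
      refine ⟨fun j => t * p j - q j, fun i => ?_⟩
      rw [omegaLin_comb]
      by_cases hFi : F i = 0
      · have hip : omegaLin n d a i p = 0 := by
          have := hp i; rw [hFi] at this
          rcases lt_trichotomy (omegaLin n d a i p) 0 with h | h | h
          · simp [sign_neg h] at this
          · exact h
          · simp [sign_pos h] at this
        rw [hip, mul_zero, zero_sub]
        have : (salStar n F C) i = -(C i) := by simp [salStar, hFi]
        rw [this, hq i, ← Left.sign_neg]
      · have hip : omegaLin n d a i p ≠ 0 := by
          intro h
          have := hp i; rw [h] at this; simp at this; exact hFi this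
        have hlt := ht i hip
        have hS : (salStar n F C) i = F i := by
          simp [salStar, hFi, hadj i hFi]
        rw [hS, hp i]
        rcases hip.lt_or_gt with h | h
        · have h1 : t * omegaLin n d a i p - omegaLin n d a i q < 0 := by
            have : |omegaLin n d a i p| = -omegaLin n d a i p := abs_of_neg h
            rw [this] at hlt
            have := neg_abs_le (omegaLin n d a i q)
            nlinarith [abs_nonneg (omegaLin n d a i q)]
          rw [sign_neg h, sign_neg h1]
        · have h1 : 0 < t * omegaLin n d a i p - omegaLin n d a i q := by
            have : |omegaLin n d a i p| = omegaLin n d a i p := abs_of_pos h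
            rw [this] at hlt
            have := le_abs_self (omegaLin n d a i q)
            nlinarith
          rw [sign_pos h, sign_pos h1]
    · intro i
      by_cases hFi : F i = 0
      · have := hC0 i
        cases h : C i <;> simp [salStar, hFi, h] <;> simp [h] at this
      · simp [salStar, hFi, hC0 i]
  · intro F C
    funext i
    by_cases hFi : F i = 0 <;> simp [salStar, hFi]
  · rintro F C F' C' _ _ hadj _ _ _ ⟨hle, hcomp⟩
    refine ⟨hle, ?_⟩
    funext i
    by_cases hF'i : F' i = 0
    · have hFi : F i = 0 := (hle i).1 hF'i
      have : C' i = C i := by rw [hcomp]; simp [faceComp, hF'i]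
      simp [salStar, faceComp, hF'i, hFi, this]
    · have : C' i = F' i := by rw [hcomp]; simp [faceComp, hF'i]
      simp [salStar, faceComp, hF'i, this]
end
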